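/- Let φ ∈ L¹(ℝ₊;ℝ₊) with ‖φ‖₁ = a ≤ 1, let R'_{-1} = ψ_φ be the resolvent of the second kind of φ (solution of ψ_φ = φ + φ*ψ_φ), and let Φ(t) = ∫_t^∞ φ(s)ds be the temporal release. Then for all t ≥ 0: Φ(t) + (R'_{-1} * Φ)(t) = a + (a - 1) ∫_0^t R'_{-1}(s) ds. -/
import Mathlib


open MeasureTheory

open Set in
private lemma ae_comp_sub_left' {f f' : ℝ → ℝ}
    (h : f =ᵐ[volume.restrict (Ioi (0:ℝ))] f') (u : ℝ) :
    (fun s => f (u - s)) =ᵐ[volume.restrict (Ioc (0:ℝ) u)] fun s => f' (u - s) := by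
  have h0 : volume ({x | ¬ f x = f' x} ∩ Ioi (0:ℝ)) = 0 := by
    have h' := h
    rw [Filter.EventuallyEq, ae_iff, Measure.restrict_apply' measurableSet_Ioi] at h'
    exact h'
  have hpre : volume ((fun s => u - s) ⁻¹' ({x | ¬ f x = f' x} ∩ Ioi 0)) = 0 :=
    (Measure.measurePreserving_sub_left volume u).quasiMeasurePreserving.preimage_null h0
  rw [Filter.EventuallyEq, ae_iff, Measure.restrict_apply' measurableSet_Ioc]
  refine measure_mono_null ?_ (measure_union_null hpre (measure_singleton u))
  rintro s ⟨hs1, hs2⟩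
  by_cases hsu : s = u
  · exact Or.inr hsu
  · refine Or.inl ⟨hs1, ?_⟩
    have h1 : s < u := lt_of_le_of_ne hs2.2 hsu
    simpa using sub_pos.2 h1

open Set in
private lemma shift_integral' (f : ℝ → ℝ) (s t : ℝ) :
    (∫ u in Icc s t, f (u - s)) = ∫ v in Ioc (0:ℝ) (t - s), f v := by
  rcases le_or_gt s t with h | h
  · rw [integral_Icc_eq_integral_Ioc, ← intervalIntegral.integral_of_le h,
      intervalIntegral.integral_comp_sub_right f s, sub_self,
      intervalIntegral.integral_of_le (by linarith : (0:ℝ) ≤ t - s)]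
  · rw [Icc_eq_empty (not_le.mpr h), Ioc_eq_empty (by simp; linarith)]
    simp

open Set in
private lemma fubini_triangle_meas {f g : ℝ → ℝ} {t : ℝ}
    (hf : StronglyMeasurable f) (hg : StronglyMeasurable g)
    (hfi : IntegrableOn f (Ioi (0:ℝ))) (hgi : IntegrableOn g (Ioc (0:ℝ) t)) :
    (∫ u in Ioc (0:ℝ) t, ∫ s in Ioc (0:ℝ) u, f (u - s) * g s)
      = ∫ s in Ioc (0:ℝ) t, g s * ∫ v in Ioc (0:ℝ) (t - s), f v := by
  set A : Set (ℝ × ℝ) := {p | 0 < p.2 ∧ p.2 ≤ p.1 ∧ p.1 ≤ t} with hA_def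
  have hA : MeasurableSet A :=
    (measurableSet_lt measurable_const measurable_snd).inter
      ((measurableSet_le measurable_snd measurable_fst).inter
        (measurableSet_le measurable_fst measurable_const))
  set H : ℝ × ℝ → ℝ := A.indicator (fun p => f (p.1 - p.2) * g p.2) with hH_def
  have hmemA : ∀ p : ℝ × ℝ, p ∈ A ↔ 0 < p.2 ∧ p.2 ≤ p.1 ∧ p.1 ≤ t := by
    intro p; rw [hA_def]; exact Iff.rfl
  have hHapp : ∀ p : ℝ × ℝ, H p = A.indicator (fun p => f (p.1 - p.2) * g p.2) p := by
    intro p; rw [hH_def]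
  have hHsm : StronglyMeasurable H :=
    ((hf.comp_measurable (measurable_fst.sub measurable_snd)).mul
      (hg.comp_measurable measurable_snd)).indicator hA
  have hrow : ∀ u ∈ Ioc (0:ℝ) t,
      (fun s => H (u, s)) = (Ioc (0:ℝ) u).indicator (fun s => f (u - s) * g s) := by
    intro u hu; funext s
    rw [hHapp]
    by_cases hs : s ∈ Ioc (0:ℝ) u
    · rw [Set.indicator_of_mem hs]
      exact Set.indicator_of_mem ((hmemA _).2 ⟨hs.1, hs.2, hu.2⟩) _
    · rw [Set.indicator_of_notMem hs, Set.indicator_of_notMem]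
      intro hmem
      have hmem' := (hmemA _).1 hmem
      exact hs ⟨hmem'.1, hmem'.2.1⟩
  have hrow0 : ∀ u : ℝ, u ∉ Ioc (0:ℝ) t → ∀ s, H (u, s) = 0 := by
    intro u hu s
    rw [hHapp]
    apply Set.indicator_of_notMem
    intro hmem
    have hmem' := (hmemA _).1 hmem
    exact hu ⟨lt_of_lt_of_le hmem'.1 hmem'.2.1, hmem'.2.2⟩
  have hcol : ∀ s ∈ Ioc (0:ℝ) t,
      (fun u => H (u, s)) = (Icc s t).indicator (fun u => f (u - s) * g s) := by
    intro s hs; funext u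
    rw [hHapp]
    by_cases hu : u ∈ Icc s t
    · rw [Set.indicator_of_mem hu]
      exact Set.indicator_of_mem ((hmemA _).2 ⟨hs.1, hu.1, hu.2⟩) _
    · rw [Set.indicator_of_notMem hu, Set.indicator_of_notMem]
      intro hmem
      have hmem' := (hmemA _).1 hmem
      exact hu ⟨hmem'.2.1, hmem'.2.2⟩
  have hcol0 : ∀ s : ℝ, s ∉ Ioc (0:ℝ) t → ∀ u, H (u, s) = 0 := by
    intro s hs u
    rw [hHapp]
    apply Set.indicator_of_notMem
    intro hmem
    have hmem' := (hmemA _).1 hmem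
    exact hs ⟨hmem'.1, le_trans hmem'.2.1 hmem'.2.2⟩
  have hshift : ∀ s : ℝ, IntegrableOn (fun u => f (u - s)) (Icc s t) := by
    intro s
    rcases le_or_gt s t with h | h
    · have h1 : IntegrableOn f (Ioc (0:ℝ) (t - s)) := hfi.mono_set Ioc_subset_Ioi_self
      have h2 : IntervalIntegrable f volume 0 (t - s) :=
        (intervalIntegrable_iff_integrableOn_Ioc_of_le (by linarith)).2 h1
      have h3 := h2.comp_sub_right s
      rw [zero_add, sub_add_cancel] at h3
      rw [integrableOn_Icc_iff_integrableOn_Ioc]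
      exact (intervalIntegrable_iff_integrableOn_Ioc_of_le h).1 h3
    · rw [Icc_eq_empty (not_le.mpr h)]
      exact integrableOn_empty
  have hcol_int : ∀ s : ℝ, Integrable (fun u => H (u, s)) volume := by
    intro s
    by_cases hs : s ∈ Ioc (0:ℝ) t
    · rw [hcol s hs, integrable_indicator_iff measurableSet_Icc]
      exact (hshift s).mul_const (g s)
    · have hz : (fun u => H (u, s)) = fun _ => (0:ℝ) := funext (hcol0 s hs)
      rw [hz]
      exact integrable_zero _ _ _
  set C : ℝ := ∫ v in Ioi (0:ℝ), ‖f v‖ with hC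
  have hnorm_eq : ∀ s ∈ Ioc (0:ℝ) t,
      (∫ u, ‖H (u, s)‖) = (∫ v in Ioc (0:ℝ) (t - s), ‖f v‖) * ‖g s‖ := by
    intro s hs
    have h1 : (fun u => ‖H (u, s)‖)
        = (Icc s t).indicator (fun u => ‖f (u - s)‖ * ‖g s‖) := by
      funext u
      rw [congrFun (hcol s hs) u, norm_indicator_eq_indicator_norm]
      by_cases hu : u ∈ Icc s t <;> simp [hu, norm_mul]
    rw [h1, integral_indicator measurableSet_Icc, integral_mul_const,
      shift_integral' (fun v => ‖f v‖) s t]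
  have hnorm_int : Integrable (fun s => ∫ u, ‖H (u, s)‖) volume := by
    apply Integrable.mono' (g := (Ioc (0:ℝ) t).indicator (fun s => C * ‖g s‖))
    · rw [integrable_indicator_iff measurableSet_Ioc]
      exact hgi.norm.const_mul C
    · exact (hHsm.norm.integral_prod_left').aestronglyMeasurable
    · refine Filter.Eventually.of_forall (fun s => ?_)
      by_cases hs : s ∈ Ioc (0:ℝ) t
      · rw [Set.indicator_of_mem hs, hnorm_eq s hs]
        rw [Real.norm_of_nonneg (by positivity)]
        refine mul_le_mul_of_nonneg_right ?_ (norm_nonneg _)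
        refine setIntegral_mono_set hfi.norm ?_ (HasSubset.Subset.eventuallyLE Ioc_subset_Ioi_self)
        exact Filter.Eventually.of_forall (fun x => norm_nonneg _)
      · rw [Set.indicator_of_notMem hs]
        have hz : (fun u => ‖H (u, s)‖) = fun _ => (0:ℝ) := by
          funext u; rw [hcol0 s hs u, norm_zero]
        rw [hz]
        simp
  have hH_int : Integrable H (volume.prod volume) := by
    rw [integrable_prod_iff' hHsm.aestronglyMeasurable]
    exact ⟨Filter.Eventually.of_forall hcol_int, hnorm_int⟩
  have hswap : (∫ u, ∫ s, H (u, s)) = ∫ s, ∫ u, H (u, s) :=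
    integral_integral_swap hH_int
  have hL : (∫ u, ∫ s, H (u, s))
      = ∫ u in Ioc (0:ℝ) t, ∫ s in Ioc (0:ℝ) u, f (u - s) * g s := by
    rw [← integral_indicator measurableSet_Ioc]
    congr 1
    funext u
    by_cases hu : u ∈ Ioc (0:ℝ) t
    · rw [Set.indicator_of_mem hu, hrow u hu, integral_indicator measurableSet_Ioc]
    · rw [Set.indicator_of_notMem hu]
      have hz : (fun s => H (u, s)) = fun _ => (0:ℝ) := funext (hrow0 u hu)
      rw [hz]
      simp
  have hR : (∫ s, ∫ u, H (u, s))
      = ∫ s in Ioc (0:ℝ) t, g s * ∫ v in Ioc (0:ℝ) (t - s), f v := by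
    rw [← integral_indicator measurableSet_Ioc]
    congr 1
    funext s
    by_cases hs : s ∈ Ioc (0:ℝ) t
    · rw [Set.indicator_of_mem hs, hcol s hs, integral_indicator measurableSet_Icc,
        integral_mul_const, shift_integral' f s t, mul_comm]
    · rw [Set.indicator_of_notMem hs]
      have hz : (fun u => H (u, s)) = fun _ => (0:ℝ) := funext (hcol0 s hs)
      rw [hz]
      simp
  rw [← hL, ← hR, hswap]

open Set in
private lemma fubini_triangle' {f g : ℝ → ℝ} {t : ℝ}
    (hfi : IntegrableOn f (Ioi (0:ℝ))) (hgi : IntegrableOn g (Ioc (0:ℝ) t)) :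
    (∫ u in Ioc (0:ℝ) t, ∫ s in Ioc (0:ℝ) u, f (u - s) * g s)
      = ∫ s in Ioc (0:ℝ) t, g s * ∫ v in Ioc (0:ℝ) (t - s), f v := by
  obtain ⟨f', hf'm, hff'⟩ := hfi.aestronglyMeasurable
  obtain ⟨g', hg'm, hgg'⟩ := hgi.aestronglyMeasurable
  have hfi' : IntegrableOn f' (Ioi (0:ℝ)) := (integrable_congr hff').1 hfi
  have hgi' : IntegrableOn g' (Ioc (0:ℝ) t) := (integrable_congr hgg').1 hgi
  have key := fubini_triangle_meas hf'm hg'm hfi' hgi'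
  have hL : (∫ u in Ioc (0:ℝ) t, ∫ s in Ioc (0:ℝ) u, f (u - s) * g s)
      = ∫ u in Ioc (0:ℝ) t, ∫ s in Ioc (0:ℝ) u, f' (u - s) * g' s := by
    apply setIntegral_congr_fun measurableSet_Ioc
    intro u hu
    apply integral_congr_ae
    have h1 := ae_comp_sub_left' hff' u
    have h2 : g =ᵐ[volume.restrict (Ioc (0:ℝ) u)] g' :=
      ae_restrict_of_ae_restrict_of_subset (Ioc_subset_Ioc_right hu.2) hgg'
    exact h1.mul h2
  have hR : (∫ s in Ioc (0:ℝ) t, g s * ∫ v in Ioc (0:ℝ) (t - s), f v)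
      = ∫ s in Ioc (0:ℝ) t, g' s * ∫ v in Ioc (0:ℝ) (t - s), f' v := by
    apply integral_congr_ae
    have hinner : ∀ s : ℝ, (∫ v in Ioc (0:ℝ) (t - s), f v) = ∫ v in Ioc (0:ℝ) (t - s), f' v :=
      fun s => integral_congr_ae (ae_restrict_of_ae_restrict_of_subset Ioc_subset_Ioi_self hff')
    filter_upwards [hgg'] with s hs
    rw [hs, hinner s]
  rw [hL, hR]
  exact key

/-- Identity for the temporal release: with `ψ = R'_{-1}` the resolvent of the
second kind of `φ` and `Φ(t) = ∫_t^∞ φ`, one has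
`Φ(t) + (ψ * Φ)(t) = a + (a-1) ∫_0^t ψ`. -/
theorem temporal_release_identity (φ ψ : ℝ → ℝ) (a : ℝ)
    (hφ_pos : ∀ t : ℝ, 0 ≤ φ t)
    (hφ_int : IntegrableOn φ (Set.Ioi 0))
    (ha : a = ∫ s in Set.Ioi (0:ℝ), φ s) (ha1 : a ≤ 1)
    (hψ_loc : ∀ T : ℝ, 0 < T → IntervalIntegrable ψ volume 0 T)
    (hψ : ∀ t : ℝ, 0 ≤ t → ψ t = φ t + ∫ s in (0:ℝ)..t, φ (t - s) * ψ s) :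
    ∀ t : ℝ, 0 ≤ t →
      (∫ s in Set.Ioi t, φ s) +
        (∫ s in (0:ℝ)..t, ψ (t - s) * ∫ r in Set.Ioi s, φ r)
      = a + (a - 1) * ∫ s in (0:ℝ)..t, ψ s := by
  intro t ht
  rcases eq_or_lt_of_le ht with h0 | ht'
  · rw [← h0]
    simp [intervalIntegral.integral_same, ← ha]
  have hφIoc : ∀ s : ℝ, IntegrableOn φ (Set.Ioc 0 s) :=
    fun s => hφ_int.mono_set Set.Ioc_subset_Ioi_self
  have hφt : IntervalIntegrable φ volume 0 t :=
    (intervalIntegrable_iff_integrableOn_Ioc_of_le ht).2 (hφIoc t)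
  have hψt : IntervalIntegrable ψ volume 0 t := hψ_loc t ht'
  have hψIoc : IntegrableOn ψ (Set.Ioc 0 t) :=
    (intervalIntegrable_iff_integrableOn_Ioc_of_le ht).1 hψt
  have hPhiDecomp : ∀ s : ℝ, 0 ≤ s →
      (∫ r in Set.Ioi s, φ r) = a - ∫ r in (0:ℝ)..s, φ r := by
    intro s hs
    have hsplit : (∫ r in Set.Ioi (0:ℝ), φ r)
        = (∫ r in Set.Ioc 0 s, φ r) + ∫ r in Set.Ioi s, φ r := by
      rw [← setIntegral_union Set.Ioc_disjoint_Ioi_same measurableSet_Ioi (hφIoc s)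
        (hφ_int.mono_set (Set.Ioi_subset_Ioi hs)), Set.Ioc_union_Ioi_eq_Ioi hs]
    rw [intervalIntegral.integral_of_le hs, ha, hsplit]
    ring
  set F : ℝ → ℝ := fun s => ∫ r in (0:ℝ)..s, φ r with hF_def
  have hFc : ContinuousOn F (Set.uIcc 0 t) := by
    apply intervalIntegral.continuousOn_primitive_interval
    rw [Set.uIcc_of_le ht, integrableOn_Icc_iff_integrableOn_Ioc]
    exact hφIoc t
  have hcore : (∫ s in (0:ℝ)..t, ψ (t - s) * F s)
      = (∫ s in (0:ℝ)..t, ψ s) - ∫ s in (0:ℝ)..t, φ s := by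
    have hrefl : (∫ s in (0:ℝ)..t, ψ (t - s) * F s)
        = ∫ s in (0:ℝ)..t, ψ s * F (t - s) := by
      have h := intervalIntegral.integral_comp_sub_left (a := 0) (b := t)
        (fun s => ψ s * F (t - s)) t
      simpa [sub_sub_cancel] using h
    rw [hrefl, intervalIntegral.integral_of_le ht]
    have h2 : (∫ s in Set.Ioc (0:ℝ) t, ψ s * F (t - s))
        = ∫ s in Set.Ioc (0:ℝ) t, ψ s * ∫ v in Set.Ioc (0:ℝ) (t - s), φ v := by
      apply setIntegral_congr_fun measurableSet_Ioc
      intro s hs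
      show ψ s * F (t - s) = ψ s * ∫ v in Set.Ioc (0:ℝ) (t - s), φ v
      congr 1
      show (∫ r in (0:ℝ)..(t - s), φ r) = _
      rw [intervalIntegral.integral_of_le (by linarith [hs.2] : (0:ℝ) ≤ t - s)]
    rw [h2, ← fubini_triangle' hφ_int hψIoc, ← intervalIntegral.integral_sub hψt hφt,
      intervalIntegral.integral_of_le ht]
    apply setIntegral_congr_fun measurableSet_Ioc
    intro u hu
    have hu' := hψ u (le_of_lt hu.1)
    show (∫ s in Set.Ioc (0:ℝ) u, φ (u - s) * ψ s) = ψ u - φ u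
    rw [← intervalIntegral.integral_of_le (le_of_lt hu.1), hu']
    ring
  have hψrefl : IntervalIntegrable (fun s => ψ (t - s)) volume 0 t := by
    have h := (hψt.comp_sub_left t).symm
    simpa using h
  have hterm2 : (∫ s in (0:ℝ)..t, ψ (t - s) * ∫ r in Set.Ioi s, φ r)
      = a * (∫ s in (0:ℝ)..t, ψ s)
        - ((∫ s in (0:ℝ)..t, ψ s) - ∫ s in (0:ℝ)..t, φ s) := by
    have e1 : (∫ s in (0:ℝ)..t, ψ (t - s) * ∫ r in Set.Ioi s, φ r)
        = ∫ s in (0:ℝ)..t, (ψ (t - s) * a - ψ (t - s) * F s) := by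
      apply intervalIntegral.integral_congr
      intro s hs
      rw [Set.uIcc_of_le ht] at hs
      show ψ (t - s) * (∫ r in Set.Ioi s, φ r) = ψ (t - s) * a - ψ (t - s) * F s
      rw [hPhiDecomp s hs.1]
      ring
    have hi1 : IntervalIntegrable (fun s => ψ (t - s) * a) volume 0 t := hψrefl.mul_const a
    have hi2 : IntervalIntegrable (fun s => ψ (t - s) * F s) volume 0 t :=
      hψrefl.mul_continuousOn hFc
    rw [e1, intervalIntegral.integral_sub hi1 hi2, hcore]
    congr 1
    have hr : (∫ s in (0:ℝ)..t, ψ (t - s)) = ∫ s in (0:ℝ)..t, ψ s := by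
      have h := intervalIntegral.integral_comp_sub_left (a := 0) (b := t) ψ t
      simpa using h
    rw [intervalIntegral.integral_mul_const, hr, mul_comm]
  rw [hPhiDecomp t ht, hterm2]
  ring
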